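/- Let n ≥ 1, let B be an n×n real matrix, let ν ∈ ℝⁿ be a unit vector, and let a, b ∈ ℝⁿ. Set A(t) = det(I + tB)·(I + tB)⁻¹(I + tB)⁻ᵀ, ω(t) = det(I + tB)·‖(I + tB)⁻ᵀ ν‖, and S = B + Bᵀ. Then the function g(t) = ⟨A(t)a, ν⟩ · ⟨A(t)b, ν⟩ / ω(t), defined for t near 0, is differentiable at t = 0 with derivative g'(0) = [ (trace B)⟨a,ν⟩ − ⟨Sa, ν⟩ ]·⟨b,ν⟩ + [ (trace B)⟨b,ν⟩ − ⟨Sb, ν⟩ ]·⟨a,ν⟩ − ⟨a,ν⟩⟨b,ν⟩·( trace B − ⟨Bν, ν⟩ ). -/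

import Mathlib

/-!
With `M(t) = I + tB` we have `M(0) = I`, so `A(0) = I` and, since `‖ν‖ = 1`, `ω(0) = 1`; the
quotient rule then gives `g'(0) = f_a'(0) f_b(0) + f_a(0) f_b'(0) − f_a(0) f_b(0) ω'(0)` with
`f_c(t) = ⟨A(t)c, ν⟩`. Jacobi's formula `(det M)'(0) = trace B` and `(M⁻¹)'(0) = −B` give
`A'(0) = (trace B) I − B − Bᵀ`, and `‖h‖' = ⟨h, h'⟩ / ‖h‖` applied to `h(t) = M(t)⁻ᵀ ν` gives
`ω'(0) = trace B − ⟨Bᵀν, ν⟩ = trace B − ⟨Bν, ν⟩`.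
-/

open Matrix

-- The `L∞` operator norm induces, definitionally, the product topology on matrices used in the
-- statement, and makes matrices a normed algebra, as the derivative of `Ring.inverse` requires.
attribute [local instance] Matrix.linftyOpNormedAddCommGroup Matrix.linftyOpNormedSpace
  Matrix.linftyOpNormedRing Matrix.linftyOpNormedAlgebra

open scoped RealInnerProductSpace

theorem HasDerivAt.linearMap_comp {𝕜 E F : Type*} [NontriviallyNormedField 𝕜] [CompleteSpace 𝕜]
    [NormedAddCommGroup E] [NormedSpace 𝕜 E] [FiniteDimensional 𝕜 E]
    [NormedAddCommGroup F] [NormedSpace 𝕜 F]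
    (L : E →ₗ[𝕜] F) {f : 𝕜 → E} {f' : E} {x : 𝕜} (hf : HasDerivAt f f' x) :
    HasDerivAt (fun t => L (f t)) (L f') x :=
  (LinearMap.toContinuousLinearMap L).hasFDerivAt.comp_hasDerivAt x hf

theorem hasDerivAt_ringInverse_one_add_smul {𝕜 R : Type*} [NontriviallyNormedField 𝕜]
    [NormedRing R] [HasSummableGeomSeries R] [NormedAlgebra 𝕜 R] (r : R) :
    HasDerivAt (fun t : 𝕜 => Ring.inverse (1 + t • r)) (-r) 0 := by
  have hline : HasDerivAt (fun t : 𝕜 => 1 + t • r) r 0 := by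
    simpa using ((hasDerivAt_id (0 : 𝕜)).smul_const r).const_add 1
  exact ((hasFDerivAt_ringInverse (𝕜 := 𝕜) (1 : Rˣ)).comp_hasDerivAt_of_eq 0 hline
    (by simp)).congr_deriv (by simp)

theorem HasDerivAt.norm {F : Type*} [NormedAddCommGroup F] [InnerProductSpace ℝ F] {f : ℝ → F}
    {f' : F} {x : ℝ} (hf : HasDerivAt f f' x) (h0 : f x ≠ 0) :
    HasDerivAt (fun t => ‖f t‖) (⟪f x, f'⟫ / ‖f x‖) x := by
  have hsqrt := hf.norm_sq.sqrt (by positivity)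
  simp only [Real.sqrt_sq (norm_nonneg _)] at hsqrt
  exact hsqrt.congr_deriv (by field_simp)

namespace Matrix

variable {m : Type*} [Fintype m] [DecidableEq m]

theorem hasDerivAt_det_one_add_smul {𝕜 : Type*} [NontriviallyNormedField 𝕜] (B : Matrix m m 𝕜) :
    HasDerivAt (fun t : 𝕜 => (1 + t • B).det) B.trace 0 := by
  set q := (det (1 + (Polynomial.X : Polynomial 𝕜) • B.map Polynomial.C)).divX.divX
  have htaylor :
      (fun t : 𝕜 => (1 + t • B).det) = fun t => 1 + B.trace * t + q.eval t * t ^ 2 :=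
    funext fun t => det_one_add_smul t B
  have hlin : HasDerivAt (fun t : 𝕜 => 1 + B.trace * t) B.trace 0 := by
    simpa using ((hasDerivAt_id (0 : 𝕜)).const_mul B.trace).const_add 1
  rw [htaylor]
  exact (hlin.add ((q.hasDerivAt 0).mul (hasDerivAt_pow 2 (0 : 𝕜)))).congr_deriv (by simp)

section RCLike

variable {𝕜 : Type*} [RCLike 𝕜]

theorem hasDerivAt_inv_one_add_smul (B : Matrix m m 𝕜) :
    HasDerivAt (fun t : 𝕜 => (1 + t • B)⁻¹) (-B) 0 := by
  simp_rw [nonsing_inv_eq_ringInverse]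
  exact hasDerivAt_ringInverse_one_add_smul B

theorem hasDerivAt_det_smul_inv_mul_inv_transpose (B : Matrix m m 𝕜) :
    HasDerivAt (fun t : 𝕜 => (1 + t • B).det • ((1 + t • B)⁻¹ * ((1 + t • B)⁻¹)ᵀ))
      (B.trace • 1 - (B + Bᵀ)) 0 := by
  have hinv := hasDerivAt_inv_one_add_smul B
  have hinvT := hinv.linearMap_comp (transposeLinearEquiv m m 𝕜 𝕜).toLinearMap
  exact ((hasDerivAt_det_one_add_smul B).smul (hinv.mul hinvT)).congr_deriv (by
    simp [sub_eq_add_neg, add_comm])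

theorem _root_.HasDerivAt.toEuclideanLin_apply {f : 𝕜 → Matrix m m 𝕜}
    {f' : Matrix m m 𝕜} {x : 𝕜} (hf : HasDerivAt f f' x) (v : EuclideanSpace 𝕜 m) :
    HasDerivAt (fun t => toEuclideanLin (f t) v) (toEuclideanLin f' v) x :=
  hf.linearMap_comp (LinearMap.applyₗ v ∘ₗ toEuclideanLin.toLinearMap)

end RCLike

theorem hasDerivAt_det_mul_norm_inv_transpose (B : Matrix m m ℝ) {ν : EuclideanSpace ℝ m}
    (hν : ‖ν‖ = 1) :
    HasDerivAt (fun t : ℝ => (1 + t • B).det * ‖toEuclideanLin ((1 + t • B)⁻¹)ᵀ ν‖)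
      (B.trace - ⟪toEuclideanLin B ν, ν⟫) 0 := by
  have hinvT := (hasDerivAt_inv_one_add_smul B).linearMap_comp
    (transposeLinearEquiv m m ℝ ℝ).toLinearMap
  have hnorm := (hinvT.toEuclideanLin_apply ν).norm
    (by simpa using ne_zero_of_norm_ne_zero (a := ν) (by simp [hν]))
  have hsymm : ⟪ν, toEuclideanLin Bᵀ ν⟫ = ⟪toEuclideanLin B ν, ν⟫ := by
    rw [← conjTranspose_eq_transpose_of_trivial, toEuclideanLin_conjTranspose_eq_adjoint,
      LinearMap.adjoint_inner_right]
  exact ((hasDerivAt_det_one_add_smul B).mul hnorm).congr_deriv (by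
    simp [hν, hsymm, sub_eq_add_neg])

end Matrix

theorem ghost_penalty_integrand_hasDerivAt_general (n : ℕ)
    (B : Matrix (Fin n) (Fin n) ℝ) (ν a b : EuclideanSpace ℝ (Fin n)) (hν : ‖ν‖ = 1) :
    HasDerivAt
      (fun t : ℝ =>
        let M : Matrix (Fin n) (Fin n) ℝ := 1 + t • B
        let A : Matrix (Fin n) (Fin n) ℝ := M.det • (M⁻¹ * (M⁻¹)ᵀ)
        (inner ℝ (Matrix.toEuclideanLin A a) ν : ℝ) *
          (inner ℝ (Matrix.toEuclideanLin A b) ν : ℝ) /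
          (M.det * ‖Matrix.toEuclideanLin ((M⁻¹)ᵀ) ν‖))
      (((B.trace * (inner ℝ a ν : ℝ) - (inner ℝ (Matrix.toEuclideanLin (B + Bᵀ) a) ν : ℝ)) *
          (inner ℝ b ν : ℝ)) +
        ((B.trace * (inner ℝ b ν : ℝ) - (inner ℝ (Matrix.toEuclideanLin (B + Bᵀ) b) ν : ℝ)) *
          (inner ℝ a ν : ℝ)) -
        (inner ℝ a ν : ℝ) * (inner ℝ b ν : ℝ) *
          (B.trace - (inner ℝ (Matrix.toEuclideanLin B ν) ν : ℝ))) 0 := by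
  have hA := hasDerivAt_det_smul_inv_mul_inv_transpose B
  have hpair (c : EuclideanSpace ℝ (Fin n)) :
      HasDerivAt
        (fun t : ℝ => ⟪toEuclideanLin ((1 + t • B).det • ((1 + t • B)⁻¹ * ((1 + t • B)⁻¹)ᵀ)) c, ν⟫)
        (B.trace * ⟪c, ν⟫ - ⟪toEuclideanLin (B + Bᵀ) c, ν⟫) 0 :=
    ((hA.toEuclideanLin_apply c).inner ℝ (hasDerivAt_const 0 ν)).congr_deriv
      (by simp [inner_sub_left, real_inner_smul_left])
  have hω := hasDerivAt_det_mul_norm_inv_transpose B hν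
  refine (((hpair a).mul (hpair b)).div hω (by simp [hν])).congr_deriv ?_
  simp only [Pi.mul_apply, zero_smul, add_zero, det_one, inv_one, transpose_one, one_smul, mul_one,
    toLpLin_one, LinearMap.id_apply, hν, div_one, one_pow]
  ring

/-- Pointwise shape derivative of the ghost-penalty integrand: with
`A(t) = det(I + tB)(I + tB)⁻¹(I + tB)⁻ᵀ`, `ω(t) = det(I + tB)‖(I + tB)⁻ᵀ ν‖` and
`S = B + Bᵀ`, the function `g(t) = ⟨A(t)a, ν⟩⟨A(t)b, ν⟩/ω(t)` has derivative at `t = 0`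
`[(trace B)⟨a,ν⟩ − ⟨Sa,ν⟩]⟨b,ν⟩ + [(trace B)⟨b,ν⟩ − ⟨Sb,ν⟩]⟨a,ν⟩ − ⟨a,ν⟩⟨b,ν⟩(trace B − ⟨Bν,ν⟩)`
(Lemma 4.4 and the Appendix of the paper). -/
theorem ghost_penalty_integrand_hasDerivAt (n : ℕ) (hn : 1 ≤ n)
    (B : Matrix (Fin n) (Fin n) ℝ) (ν a b : EuclideanSpace ℝ (Fin n)) (hν : ‖ν‖ = 1) :
    HasDerivAt
      (fun t : ℝ =>
        let M : Matrix (Fin n) (Fin n) ℝ := 1 + t • B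
        let A : Matrix (Fin n) (Fin n) ℝ := M.det • (M⁻¹ * (M⁻¹)ᵀ)
        (inner ℝ (Matrix.toEuclideanLin A a) ν : ℝ) *
          (inner ℝ (Matrix.toEuclideanLin A b) ν : ℝ) /
          (M.det * ‖Matrix.toEuclideanLin ((M⁻¹)ᵀ) ν‖))
      (((B.trace * (inner ℝ a ν : ℝ) - (inner ℝ (Matrix.toEuclideanLin (B + Bᵀ) a) ν : ℝ)) *
          (inner ℝ b ν : ℝ)) +
        ((B.trace * (inner ℝ b ν : ℝ) - (inner ℝ (Matrix.toEuclideanLin (B + Bᵀ) b) ν : ℝ)) *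
          (inner ℝ a ν : ℝ)) -
        (inner ℝ a ν : ℝ) * (inner ℝ b ν : ℝ) *
          (B.trace - (inner ℝ (Matrix.toEuclideanLin B ν) ν : ℝ))) 0 :=
  ghost_penalty_integrand_hasDerivAt_general n B ν a b hν
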